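/- Suppose η: ℝⁿ → ℝⁿ satisfies zᵀη(z) ≥ zᵀΥz for all z with ‖z‖₂ ≤ e_max, where Υ = diag(υ₁,…,υₙ) with υᵢ ≥ 0 and Σᵢ υᵢ > 0. Then for a connected graph with weights a_ij and stack error vector e with blocks eᵢ satisfying Σᵢeᵢ = 0 and ‖eᵢ − eⱼ‖₂ ≤ e_max for all i,j, one has ½ Σᵢ Σⱼ a_ij (eᵢ − eⱼ)ᵀ η(eᵢ − eⱼ) ≥ eᵀ(L ⊗ Υ)e ≥ λ₂(L ⊗ Υ_r ⊕ 0) ‖ẽ_r‖₂², where ẽ_r collects the components of e corresponding to positive υᵢ. -/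

import Mathlib

open Matrix Finset Kronecker

/-!
The weighted Laplacian satisfies `∑ᵢⱼ L_ij ⟨eᵢ, eⱼ⟩_Υ = ½ ∑ᵢⱼ a_ij ‖eᵢ − eⱼ‖²_Υ`, so the first
inequality is the sector condition applied to each edge term. For the second, the components with
`υ_k = 0` drop out and the middle expression becomes the quadratic form of `M = L ⊗ Υ_r` at the
truncated stack `ẽ_r`. By the same identity a kernel vector of `M` takes equal values at adjacent
nodes, hence (the graph being connected) is constant across nodes; as `∑ᵢ eᵢ = 0`, the vector
`ẽ_r` is orthogonal to the kernel, and expanding it in an orthonormal eigenbasis of `M` gives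
`ẽ_rᵀ M ẽ_r ≥ λ₂ ‖ẽ_r‖²`.
-/

lemma dotProduct_kronecker_diagonal_mulVec {ι κ R : Type*} [Fintype ι] [Fintype κ]
    [DecidableEq κ] [CommSemiring R] (L : Matrix ι ι R) (d : κ → R) (z : ι × κ → R) :
    z ⬝ᵥ ((L ⊗ₖ diagonal d) *ᵥ z) = ∑ i, ∑ j, L i j * ∑ k, d k * z (i, k) * z (j, k) := by
  simp only [dotProduct, mulVec, Fintype.sum_prod_type, kroneckerMap_apply, diagonal_apply,
    mul_ite, ite_mul, mul_zero, zero_mul, Finset.sum_ite_eq, Finset.mem_univ, if_true,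
    Finset.mul_sum]
  refine Finset.sum_congr rfl fun i _ => ?_
  rw [Finset.sum_comm]
  exact Finset.sum_congr rfl fun j _ => Finset.sum_congr rfl fun k _ => by ring

lemma Fin.sum_castLE_of_eq_zero {M : Type*} [AddCommMonoid M] {r n : ℕ} (hr : r ≤ n)
    {f : Fin n → M} (hf : ∀ k : Fin n, r ≤ (k : ℕ) → f k = 0) :
    ∑ k : Fin r, f (Fin.castLE hr k) = ∑ k, f k :=
  Fintype.sum_of_injective _ (Fin.castLE_injective hr) _ _
    (fun k hk => hf k (not_lt.1 fun h => hk ⟨⟨k, h⟩, rfl⟩)) fun _ => rfl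

lemma SimpleGraph.Connected.apply_eq_of_forall_adj {V α : Type*} {G : SimpleGraph V}
    (hG : G.Connected) {f : V → α} (hf : ∀ i j, G.Adj i j → f i = f j) (i j : V) :
    f i = f j := by
  obtain ⟨w⟩ := hG.preconnected i j
  induction w with
  | nil => rfl
  | cons h _ ih => exact (hf _ _ h).trans ih

lemma Matrix.IsHermitian.kronecker {ι κ R : Type*} [CommRing R] [StarRing R]
    {A : Matrix ι ι R} {B : Matrix κ κ R} (hA : A.IsHermitian) (hB : B.IsHermitian) :
    (A ⊗ₖ B).IsHermitian := by
  rw [IsHermitian, conjTranspose_kronecker, hA.eq, hB.eq]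

lemma dotProduct_eq_zero_of_sum_fst_eq_zero {ι κ R : Type*} [Fintype ι] [Fintype κ]
    [Semiring R] (c : κ → R) {x : ι × κ → R} (hx : ∀ k, ∑ i, x (i, k) = 0) :
    (fun p => c p.2) ⬝ᵥ x = 0 := by
  rw [dotProduct, Fintype.sum_prod_type, Finset.sum_comm]
  simp [← Finset.mul_sum, hx]

lemma Matrix.IsHermitian.mul_dotProduct_self_le_of_orthogonal_ker {n : Type*} [Fintype n]
    [DecidableEq n] {M : Matrix n n ℝ} (hM : M.IsHermitian) {lam : ℝ}
    (hlam : lam ∈ lowerBounds {μ : ℝ | μ ≠ 0 ∧ ∃ z : n → ℝ, z ≠ 0 ∧ M *ᵥ z = μ • z})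
    {x : n → ℝ} (hx : ∀ v, M *ᵥ v = 0 → v ⬝ᵥ x = 0) :
    lam * (x ⬝ᵥ x) ≤ x ⬝ᵥ (M *ᵥ x) := by
  set b := hM.eigenvectorBasis
  set c : n → ℝ := fun i => ⇑(b i) ⬝ᵥ x
  have hdot : ∀ y : n → ℝ, x ⬝ᵥ y = ∑ i, c i * (⇑(b i) ⬝ᵥ y) := fun y => by
    have := b.sum_inner_mul_inner (WithLp.toLp 2 x) (WithLp.toLp 2 y)
    simp only [EuclideanSpace.inner_eq_star_dotProduct, star_trivial] at this
    rw [dotProduct_comm, ← this]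
    exact Finset.sum_congr rfl fun i _ => by rw [dotProduct_comm y]
  have hb : ∀ i, ⇑(b i) ⬝ᵥ (M *ᵥ x) = hM.eigenvalues i * c i := fun i => by
    rw [dotProduct_mulVec, ← mulVec_transpose, ← conjTranspose_eq_transpose_of_trivial, hM.eq,
      hM.mulVec_eigenvectorBasis, smul_dotProduct, smul_eq_mul]
  rw [hdot, hdot, Finset.mul_sum]
  refine Finset.sum_le_sum fun i _ => ?_
  rw [hb]
  by_cases hμ : hM.eigenvalues i = 0
  · have : c i = 0 := hx _ (by rw [hM.mulVec_eigenvectorBasis, hμ, zero_smul])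
    simp [this]
  · have hne : ⇑(b i) ≠ 0 := fun h => b.orthonormal.ne_zero i (by ext p; exact congrFun h p)
    have := hlam ⟨hμ, _, hne, hM.mulVec_eigenvectorBasis i⟩
    nlinarith [sq_nonneg (c i)]

section WeightedLaplacian

variable {ι : Type*} [Fintype ι] [DecidableEq ι] {a : ι → ι → ℝ}

def weightedLaplacian (a : ι → ι → ℝ) : Matrix ι ι ℝ :=
  diagonal (fun i => ∑ j, a i j) - of a

lemma eq_weightedLaplacian {L : Matrix ι ι ℝ}
    (hL : ∀ i j, L i j = if i = j then ∑ k ∈ univ.erase i, a i k else -a i j) :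
    L = weightedLaplacian a := by
  ext i j
  rw [hL]
  split_ifs with h
  · subst h
    rw [weightedLaplacian, Matrix.sub_apply, diagonal_apply_eq, of_apply,
      ← Finset.add_sum_erase _ _ (mem_univ i), add_sub_cancel_left]
  · simp [weightedLaplacian, h]

lemma isHermitian_weightedLaplacian (hsym : ∀ i j, a i j = a j i) :
    (weightedLaplacian a).IsHermitian := by
  ext i j
  by_cases h : i = j
  · subst h; rfl
  · simp [weightedLaplacian, h, Ne.symm h, hsym i j]

lemma sum_weightedLaplacian_mul (hsym : ∀ i j, a i j = a j i) (s : ι → ι → ℝ) :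
    ∑ i, ∑ j, weightedLaplacian a i j * s i j =
      1 / 2 * ∑ i, ∑ j, a i j * (s i i - 2 * s i j + s j j) := by
  have hswap : ∑ i, ∑ j, a i j * s j j = ∑ i, ∑ j, a i j * s i i := by
    rw [Finset.sum_comm]; simp_rw [hsym]
  simp only [weightedLaplacian, Matrix.sub_apply, diagonal_apply, of_apply, sub_mul, ite_mul,
    zero_mul, Finset.sum_sub_distrib, Finset.sum_ite_eq, Finset.mem_univ, if_true,
    Finset.sum_mul, mul_add, mul_sub, Finset.sum_add_distrib, hswap]
  simp only [mul_left_comm _ (2 : ℝ), ← Finset.mul_sum]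
  ring

lemma sum_weightedLaplacian_mul_sum (hsym : ∀ i j, a i j = a j i) {κ : Type*} [Fintype κ]
    (d : κ → ℝ) (z : ι → κ → ℝ) :
    ∑ i, ∑ j, weightedLaplacian a i j * ∑ k, d k * z i k * z j k =
      1 / 2 * ∑ i, ∑ j, a i j * ∑ k, d k * (z i k - z j k) ^ 2 := by
  rw [sum_weightedLaplacian_mul hsym]
  congr 1
  refine Finset.sum_congr rfl fun i _ => Finset.sum_congr rfl fun j _ => ?_
  rw [Finset.mul_sum, ← Finset.sum_sub_distrib, ← Finset.sum_add_distrib]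
  exact congrArg _ (Finset.sum_congr rfl fun k _ => by ring)

lemma exists_eq_comp_snd_of_kronecker_mulVec_eq_zero (hsym : ∀ i j, a i j = a j i)
    (hnonneg : ∀ i j, 0 ≤ a i j) {G : SimpleGraph ι} (hadj : ∀ i j, G.Adj i j → 0 < a i j)
    (hconn : G.Connected) {κ : Type*} [Fintype κ] [DecidableEq κ] {d : κ → ℝ}
    (hd : ∀ k, 0 < d k) {v : ι × κ → ℝ} (hv : (weightedLaplacian a ⊗ₖ diagonal d) *ᵥ v = 0) :
    ∃ c : κ → ℝ, v = fun p => c p.2 := by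
  have hterm : ∀ i j k, 0 ≤ d k * (v (i, k) - v (j, k)) ^ 2 :=
    fun i j k => mul_nonneg (hd k).le (sq_nonneg _)
  have hedge_nonneg : ∀ i j, 0 ≤ a i j * ∑ k, d k * (v (i, k) - v (j, k)) ^ 2 :=
    fun i j => mul_nonneg (hnonneg i j) (Finset.sum_nonneg fun k _ => hterm i j k)
  have hzero : ∑ i, ∑ j, a i j * ∑ k, d k * (v (i, k) - v (j, k)) ^ 2 = 0 := by
    have := dotProduct_kronecker_diagonal_mulVec (weightedLaplacian a) d v
    rw [hv, dotProduct_zero, sum_weightedLaplacian_mul_sum hsym d fun i k => v (i, k)] at this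
    linarith
  have hedge : ∀ i j, G.Adj i j → (fun k => v (i, k)) = fun k => v (j, k) := by
    intro i j hij
    rw [Finset.sum_eq_zero_iff_of_nonneg fun i _ => Finset.sum_nonneg fun j _ =>
      hedge_nonneg i j] at hzero
    have hedge_zero := (Finset.sum_eq_zero_iff_of_nonneg fun j _ => hedge_nonneg i j).1
      (hzero i (mem_univ i)) j (mem_univ j)
    rw [mul_eq_zero, or_iff_right (hadj i j hij).ne',
      Finset.sum_eq_zero_iff_of_nonneg fun k _ => hterm i j k] at hedge_zero
    funext k
    have := hedge_zero k (mem_univ k)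
    rw [mul_eq_zero, or_iff_right (hd k).ne', sq_eq_zero_iff, sub_eq_zero] at this
    exact this
  obtain ⟨i₀⟩ := hconn.nonempty
  exact ⟨fun k => v (i₀, k),
    funext fun p => congrFun (hconn.apply_eq_of_forall_adj hedge p.1 i₀) p.2⟩

end WeightedLaplacian

theorem stmt12_general (N n r : ℕ) (hr : r ≤ n)
    (η : (Fin n → ℝ) → (Fin n → ℝ))
    (υ : Fin n → ℝ) (hυpos : ∀ k : Fin n, (k : ℕ) < r → 0 < υ k)
    (hυ0 : ∀ k : Fin n, r ≤ (k : ℕ) → υ k = 0)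
    (emax : ℝ)
    (hsector : ∀ z : Fin n → ℝ, Real.sqrt (∑ k, (z k) ^ 2) ≤ emax →
      z ⬝ᵥ η z ≥ ∑ k, υ k * (z k) ^ 2)
    (a : Fin N → Fin N → ℝ) (hsym : ∀ i j, a i j = a j i) (hnonneg : ∀ i j, 0 ≤ a i j)
    (G : SimpleGraph (Fin N)) (hadj : ∀ i j, G.Adj i j ↔ i ≠ j ∧ 0 < a i j)
    (hconn : G.Connected)
    (L : Matrix (Fin N) (Fin N) ℝ)
    (hL : ∀ i j, L i j = if i = j then ∑ k ∈ univ.erase i, a i k else -a i j)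
    (lam₂ : ℝ)
    (hlam₂ : IsLeast {μ : ℝ | μ ≠ 0 ∧ ∃ z : Fin N × Fin r → ℝ, z ≠ 0 ∧
      (L ⊗ₖ Matrix.diagonal (fun k : Fin r => υ (Fin.castLE hr k))) *ᵥ z = μ • z} lam₂)
    (e : Fin N → Fin n → ℝ) (hsum : ∑ i, e i = 0)
    (hediff : ∀ i j, Real.sqrt (∑ k, (e i k - e j k) ^ 2) ≤ emax) :
    ((1 / 2 : ℝ) * ∑ i, ∑ j, a i j * ((e i - e j) ⬝ᵥ η (e i - e j)) ≥
      ∑ i, ∑ j, L i j * ∑ k, υ k * e i k * e j k) ∧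
    (∑ i, ∑ j, L i j * ∑ k, υ k * e i k * e j k ≥
      lam₂ * ∑ i, ∑ k : Fin r, (e i (Fin.castLE hr k)) ^ 2) := by
  obtain rfl := eq_weightedLaplacian hL
  set M := weightedLaplacian a ⊗ₖ diagonal fun k : Fin r => υ (Fin.castLE hr k)
  set x : Fin N × Fin r → ℝ := fun p => e p.1 (Fin.castLE hr p.2)
  refine ⟨?_, ?_⟩
  · rw [sum_weightedLaplacian_mul_sum hsym, ge_iff_le]
    gcongr with i _ j _
    · exact hnonneg i j
    · simpa using hsector (e i - e j) (by simpa using hediff i j)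
  · have hquad : ∑ i, ∑ j, weightedLaplacian a i j * ∑ k, υ k * e i k * e j k =
        x ⬝ᵥ (M *ᵥ x) := by
      rw [dotProduct_kronecker_diagonal_mulVec]
      refine Finset.sum_congr rfl fun i _ => Finset.sum_congr rfl fun j _ => ?_
      rw [← Fin.sum_castLE_of_eq_zero hr fun k hk => by rw [hυ0 k hk, zero_mul, zero_mul]]
    have hperp : ∀ v, M *ᵥ v = 0 → v ⬝ᵥ x = 0 := fun v hv => by
      obtain ⟨c, rfl⟩ := exists_eq_comp_snd_of_kronecker_mulVec_eq_zero hsym hnonneg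
        (fun i j h => ((hadj i j).1 h).2) hconn (fun k => hυpos _ (by simp)) hv
      exact dotProduct_eq_zero_of_sum_fst_eq_zero c fun k => by
        simpa using congrFun hsum (Fin.castLE hr k)
    have hM : M.IsHermitian :=
      (isHermitian_weightedLaplacian hsym).kronecker (isHermitian_diagonal _)
    rw [hquad, ge_iff_le]
    convert hM.mul_dotProduct_self_le_of_orthogonal_ker hlam₂.2 hperp using 2
    simp [dotProduct, x, Fintype.sum_prod_type, sq]

/-- If the coupling function `η` satisfies the sector condition
`zᵀη(z) ≥ zᵀΥz` on the ball `‖z‖₂ ≤ e_max`, with `Υ = diag υ`, `υ k > 0` for `k < r` and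
`υ k = 0` otherwise, then for a connected graph with Laplacian `L` and a stack error `e` with
`∑ᵢeᵢ = 0` and `‖eᵢ − eⱼ‖₂ ≤ e_max` for all `i,j`, one has
`½ΣᵢΣⱼ a_ij(eᵢ−eⱼ)ᵀη(eᵢ−eⱼ) ≥ eᵀ(L⊗Υ)e ≥ λ₂(L⊗Υ_r) ‖ẽ_r‖₂²`. -/
theorem stmt12 (N n r : ℕ) (hN : 1 ≤ N) (hr : r ≤ n)
    (η : (Fin n → ℝ) → (Fin n → ℝ))
    (υ : Fin n → ℝ) (hυpos : ∀ k : Fin n, (k : ℕ) < r → 0 < υ k)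
    (hυ0 : ∀ k : Fin n, r ≤ (k : ℕ) → υ k = 0)
    (emax : ℝ) (hemax : 0 < emax)
    (hsector : ∀ z : Fin n → ℝ, Real.sqrt (∑ k, (z k) ^ 2) ≤ emax →
      z ⬝ᵥ η z ≥ ∑ k, υ k * (z k) ^ 2)
    (a : Fin N → Fin N → ℝ) (hsym : ∀ i j, a i j = a j i) (hnonneg : ∀ i j, 0 ≤ a i j)
    (G : SimpleGraph (Fin N)) (hadj : ∀ i j, G.Adj i j ↔ i ≠ j ∧ 0 < a i j)
    (hconn : G.Connected)
    (L : Matrix (Fin N) (Fin N) ℝ)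
    (hL : ∀ i j, L i j = if i = j then ∑ k ∈ univ.erase i, a i k else -a i j)
    (lam₂ : ℝ)
    (hlam₂ : IsLeast {μ : ℝ | μ ≠ 0 ∧ ∃ z : Fin N × Fin r → ℝ, z ≠ 0 ∧
      (L ⊗ₖ Matrix.diagonal (fun k : Fin r => υ (Fin.castLE hr k))) *ᵥ z = μ • z} lam₂)
    (e : Fin N → Fin n → ℝ) (hsum : ∑ i, e i = 0)
    (hediff : ∀ i j, Real.sqrt (∑ k, (e i k - e j k) ^ 2) ≤ emax) :
    ((1 / 2 : ℝ) * ∑ i, ∑ j, a i j * ((e i - e j) ⬝ᵥ η (e i - e j)) ≥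
      ∑ i, ∑ j, L i j * ∑ k, υ k * e i k * e j k) ∧
    (∑ i, ∑ j, L i j * ∑ k, υ k * e i k * e j k ≥
      lam₂ * ∑ i, ∑ k : Fin r, (e i (Fin.castLE hr k)) ^ 2) :=
  stmt12_general N n r hr η υ hυpos hυ0 emax hsector a hsym hnonneg G hadj hconn L hL lam₂ hlam₂ e
    hsum hediff
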